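/- Exactness of TT cross interpolation with nested pivots for an exactly rank-constrained tensor: let f : [d1]×⋯×[dn] → ℝ admit a TT representation with ranks r_1,…,r_{n−1}, let 𝐱 be a set of N pivots whose partial pivot sets 𝐱_{1:k}, 𝐱_{k+1:n} satisfy that each matrix f(𝐱_{1:k}, 𝐱_{k+1:n}) is invertible of size N×N with rank equal to the rank of the full unfolding f(x_{1:k}, x_{k+1:n}). Then the cores G_1 = f([d1], 𝐱_{2:n}), G_k = f(𝐱_{1:k−1}, 𝐱_{k:n})^{−1} f(𝐱_{1:k−1}, [d_k], 𝐱_{k+1:n}) for 2 ≤ k ≤ n−1, and G_n = f(𝐱_{1:n−1}, 𝐱_n)^{−1} f(𝐱_{1:n−1}, [d_n]) contract to reproduce f exactly: f(x_1,…,x_n) = G_1(x_1,·)G_2(·,x_2,·)⋯G_n(·,x_n). -/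

import Mathlib

open Matrix BigOperators

noncomputable section

/-- Partial product of tensor-train cores: a matrix from rank `r 0` to rank `r k`. -/
def ttMat (n : ℕ) (d r : ℕ → ℕ)
    (G : ∀ k : Fin n, Fin (r k) → Fin (d k) → Fin (r (k + 1)) → ℝ)
    (x : ∀ i : Fin n, Fin (d i)) :
    (k : ℕ) → k ≤ n → Matrix (Fin (r 0)) (Fin (r k)) ℝ
  | 0, _ => 1
  | (k + 1), h =>
      ttMat n d r G x k (Nat.le_of_succ_le h) *
        Matrix.of (fun a b => G ⟨k, h⟩ a (x ⟨k, h⟩) b)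

/-- The scalar function represented by a tensor train (boundary ranks `r 0 = r n = 1`). -/
def ttFun (n : ℕ) (d r : ℕ → ℕ)
    (G : ∀ k : Fin n, Fin (r k) → Fin (d k) → Fin (r (k + 1)) → ℝ)
    (x : ∀ i : Fin n, Fin (d i)) : ℝ :=
  ∑ a : Fin (r 0), ∑ b : Fin (r n), ttMat n d r G x n le_rfl a b

/-- The `k`-th unfolding matrix of a tensor: rows are the first `k` variables,
columns the remaining `n - k` variables. -/
def unfold (n : ℕ) (d : ℕ → ℕ) (f : (∀ i : Fin n, Fin (d i)) → ℝ) (k : ℕ) (hk : k ≤ n) :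
    Matrix (∀ i : Fin k, Fin (d i)) (∀ j : Fin (n - k), Fin (d (k + j))) ℝ :=
  Matrix.of fun a b =>
    f (fun i =>
      if h : i.val < k then a ⟨i.val, h⟩
      else
        have h2 : i.val - k < n - k := by have := i.isLt; omega
        Fin.cast (congrArg d (show k + (i.val - k) = i.val by omega)) (b ⟨i.val - k, h2⟩))

/-- The configuration whose coordinates below `s` come from `u`, coordinate `s` from
`v`, and coordinates above `s` from `w`. -/
def pt (n : ℕ) (d : ℕ → ℕ) (u v w : ∀ i : Fin n, Fin (d i)) (s : ℕ) :
    ∀ i : Fin n, Fin (d i) :=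
  fun i => if i.val < s then u i else if s < i.val then w i else v i

/-- The `N × N` cross matrix of `f` at split `t` (first `t` coordinates from the row
pivot, the rest from the column pivot): `f(𝐱_{1:t}, 𝐱_{t+1:n})`. -/
def crossMat (n N : ℕ) (d : ℕ → ℕ) (f : (∀ i : Fin n, Fin (d i)) → ℝ)
    (X : Fin N → ∀ i : Fin n, Fin (d i)) (t : ℕ) : Matrix (Fin N) (Fin N) ℝ :=
  Matrix.of fun i j => f (pt n d (X i) (X j) (X j) t)

/-- The TT-CI middle core at (0-based) site `t`, evaluated at configuration `x`:
`f(𝐱_{1:t}, 𝐱_{t+1:n})⁻¹ · f(𝐱_{1:t}, x_t, 𝐱_{t+2:n})`. -/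
def coreMat (n N : ℕ) (d : ℕ → ℕ) (f : (∀ i : Fin n, Fin (d i)) → ℝ)
    (X : Fin N → ∀ i : Fin n, Fin (d i)) (x : ∀ i : Fin n, Fin (d i)) (t : ℕ) :
    Matrix (Fin N) (Fin N) ℝ :=
  (crossMat n N d f X t)⁻¹ * Matrix.of fun i j => f (pt n d (X i) x (X j) t)

/-- Product of the TT-CI middle cores at sites `1, …, k`. -/
def midProd (n N : ℕ) (d : ℕ → ℕ) (f : (∀ i : Fin n, Fin (d i)) → ℝ)
    (X : Fin N → ∀ i : Fin n, Fin (d i)) (x : ∀ i : Fin n, Fin (d i)) :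
    ℕ → Matrix (Fin N) (Fin N) ℝ
  | 0 => 1
  | (k + 1) => midProd n N d f X x k * coreMat n N d f X x (k + 1)

/-- The full TT-CI interpolation of `f`: the contraction
`G₁(x₁,·) G₂(·,x₂,·) ⋯ Gₙ(·,xₙ)` with
`G₁ = f([d₁], 𝐱_{2:n})`, `G_k = f(𝐱_{1:k-1}, 𝐱_{k:n})⁻¹ f(𝐱_{1:k-1}, [d_k], 𝐱_{k+1:n})`
and `G_n = f(𝐱_{1:n-1}, 𝐱_n)⁻¹ f(𝐱_{1:n-1}, [d_n])`. -/
def fCI (n N : ℕ) (d : ℕ → ℕ) (f : (∀ i : Fin n, Fin (d i)) → ℝ)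
    (X : Fin N → ∀ i : Fin n, Fin (d i)) (x : ∀ i : Fin n, Fin (d i)) : ℝ :=
  dotProduct
    (Matrix.vecMul (fun j => f (pt n d (X j) x (X j) 0))
      (midProd n N d f X x (n - 2)))
    ((crossMat n N d f X (n - 1))⁻¹.mulVec fun i => f (pt n d (X i) x (X i) (n - 1)))

/-! A matrix `M` whose rank is attained by an invertible `N × N` submatrix `A = M[ρ, γ]` satisfies
`M = M[:, γ] A⁻¹ M[ρ, :]`: the columns `M[:, γ]` span the column space of `M`, and the
coefficients are pinned down by the rows `ρ`. Applied to the unfolding of `f` at split `k`,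
this expresses `f(y_{1:k}, z_{k+1:n})` through the cross matrix at split `k`. Because the pivots
are nested, the cross identity at split `k` turns the row vector `f(x_{1:k}, 𝐱_{k+1:n})` times
the `k`-th core into `f(x_{1:k+1}, 𝐱_{k+2:n})`, so the contraction telescopes to
`f(x_{1:n-1}, 𝐱_n) f(𝐱_{1:n-1}, 𝐱_n)⁻¹ f(𝐱_{1:n-1}, x_n) = f(x)`. -/

theorem Matrix.eq_mul_inv_mul_of_rank_submatrix_eq {m n ι K : Type*} [Field K] [Fintype n]
    [Fintype ι] [DecidableEq ι] (M : Matrix m n K) (ρ : ι → m) (γ : ι → n)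
    (hA : IsUnit (M.submatrix ρ γ)) (hrank : (M.submatrix ρ γ).rank = M.rank) :
    M = M.submatrix id γ * (M.submatrix ρ γ)⁻¹ * M.submatrix ρ id := by
  set C := M.submatrix id γ
  have hrankC : C.rank = M.rank :=
    le_antisymm (M.rank_submatrix_le id γ) (hrank ▸ C.rank_submatrix_le ρ id)
  have hrange : LinearMap.range C.mulVecLin = LinearMap.range M.mulVecLin := by
    refine Submodule.eq_of_le_of_finrank_le ?_ hrankC.ge
    rw [range_mulVecLin, range_mulVecLin]
    exact Submodule.span_mono (Set.range_comp_subset_range γ M.col)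
  obtain ⟨W, hW⟩ : ∃ W : Matrix ι n K, C * W = M := by
    have hcol (q : n) : M.col q ∈ LinearMap.range C.mulVecLin := by
      rw [hrange, range_mulVecLin]
      exact Submodule.subset_span ⟨q, rfl⟩
    choose w hw using hcol
    exact ⟨of fun j q => w q j, by ext p q; exact congrFun (hw q) p⟩
  have hRW : M.submatrix ρ id = M.submatrix ρ γ * W := by
    conv_lhs => rw [← hW]
    rfl
  rw [hRW, Matrix.mul_assoc, nonsing_inv_mul_cancel_left _ _ ((isUnit_iff_isUnit_det _).mp hA),
    hW]

theorem Fin.cast_apply_of_eq {n : ℕ} {d : ℕ → ℕ} (y : ∀ i : Fin n, Fin (d i)) {a b : Fin n}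
    (hab : a = b) : Fin.cast (congrArg (fun i : Fin n => d i) hab) (y a) = y b := by
  subst hab
  rfl

def glue {n : ℕ} {α : Fin n → Type*} (x y : ∀ i, α i) (k : ℕ) : ∀ i, α i :=
  fun i => if i.val < k then x i else y i

section Glue

variable {n : ℕ} {α : Fin n → Type*} (x y : ∀ i, α i)

@[simp]
theorem glue_self (k : ℕ) : glue x x k = x := by
  funext i
  simp [glue]

@[simp]
theorem glue_zero : glue x y 0 = y := by
  funext i
  simp [glue]

theorem glue_of_le {k : ℕ} (hk : n ≤ k) : glue x y k = x := by
  funext i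
  simp [glue, i.isLt.trans_le hk]

theorem glue_glue_self_left {k m : ℕ} (hkm : k ≤ m) : glue x (glue x y m) k = glue x y m := by
  funext i
  by_cases hik : i.val < k <;> simp [glue, hik, show i.val < k → i.val < m by omega]

end Glue

theorem pt_eq_glue (n : ℕ) (d : ℕ → ℕ) (u v w : ∀ i : Fin n, Fin (d i)) (s : ℕ) :
    pt n d u v w s = glue u (glue v w (s + 1)) s := by
  funext i
  simp only [pt, glue]
  split_ifs <;> first | rfl | omega

section CrossInterpolation

variable {n N : ℕ} {d : ℕ → ℕ} (f : (∀ i : Fin n, Fin (d i)) → ℝ)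
  (X : Fin N → ∀ i : Fin n, Fin (d i))

theorem unfold_apply (k : ℕ) (hk : k ≤ n) (x y : ∀ i : Fin n, Fin (d i)) :
    unfold n d f k hk (fun i => x ⟨i, by omega⟩) (fun j => y ⟨k + j, by omega⟩) =
      f (glue x y k) := by
  refine congrArg f (funext fun i => ?_)
  by_cases hik : i.val < k
  · simp [glue, hik]
  · simp only [glue, hik]
    exact Fin.cast_apply_of_eq y (Fin.ext (by simp only; omega))

theorem crossMat_eq (k : ℕ) : crossMat n N d f X k = of fun i j => f (glue (X i) (X j) k) := by
  simp [crossMat, pt_eq_glue]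

theorem unfold_submatrix (k : ℕ) (hk : k ≤ n) :
    (unfold n d f k hk).submatrix (fun i t => X i ⟨t, by omega⟩)
      (fun j t => X j ⟨k + t, by omega⟩) = crossMat n N d f X k := by
  ext i j
  simp [unfold_apply, crossMat_eq]

def CrossExactAt (k : ℕ) : Prop :=
  ∀ y z, f (glue y z k) =
    ((fun i => f (glue y (X i) k)) ᵥ* (crossMat n N d f X k)⁻¹) ⬝ᵥ fun i => f (glue (X i) z k)

theorem crossExactAt_of_rank_eq {k : ℕ} (hk : k ≤ n) (hA : IsUnit (crossMat n N d f X k))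
    (hrank : (crossMat n N d f X k).rank = (unfold n d f k hk).rank) : CrossExactAt f X k := by
  intro y z
  rw [← unfold_submatrix f X k hk] at hA hrank
  have := congrFun₂ ((unfold n d f k hk).eq_mul_inv_mul_of_rank_submatrix_eq _ _ hA hrank)
    (fun i => y ⟨i, by omega⟩) (fun j => z ⟨k + j, by omega⟩)
  rw [unfold_submatrix] at this
  simpa [Matrix.mul_apply, vecMul, dotProduct, unfold_apply] using this

theorem vecMul_midProd (hexact : ∀ k, 1 ≤ k → k < n → CrossExactAt f X k)
    (x : ∀ i : Fin n, Fin (d i)) {k : ℕ} (hk : k + 2 ≤ n) :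
    (fun j => f (glue x (X j) 1)) ᵥ* midProd n N d f X x k =
      fun j => f (glue x (X j) (k + 1)) := by
  induction k with
  | zero => exact vecMul_one _
  | succ k ih =>
    rw [midProd, ← vecMul_vecMul, ih (by omega), coreMat, ← vecMul_vecMul]
    funext j
    rw [← glue_glue_self_left x (X j) (Nat.le_succ (k + 1)),
      hexact (k + 1) (by omega) (by omega)]
    simp only [pt_eq_glue]
    rfl

end CrossInterpolation

theorem tt_ci_exact (n N : ℕ) (hn : 2 ≤ n) (d : ℕ → ℕ)
    (f : (∀ i : Fin n, Fin (d i)) → ℝ)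
    (X : Fin N → ∀ i : Fin n, Fin (d i))
    (hcross : ∀ k (hk1 : 1 ≤ k) (hk2 : k ≤ n - 1),
      IsUnit (crossMat n N d f X k) ∧
        (crossMat n N d f X k).rank = (unfold n d f k (by omega)).rank) :
    ∀ x, fCI n N d f X x = f x := by
  intro x
  have hexact (k : ℕ) (hk1 : 1 ≤ k) (hkn : k < n) : CrossExactAt f X k :=
    crossExactAt_of_rank_eq f X hkn.le (hcross k hk1 (by omega)).1 (hcross k hk1 (by omega)).2
  have hlast : n - 1 + 1 = n := by omega
  calc fCI n N d f X x
      = ((fun j => f (glue x (X j) (n - 1))) ᵥ* (crossMat n N d f X (n - 1))⁻¹) ⬝ᵥ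
          fun i => f (glue (X i) x (n - 1)) := by
        rw [fCI, dotProduct_mulVec]
        simp only [pt_eq_glue, glue_zero, hlast, glue_of_le _ _ le_rfl]
        rw [vecMul_midProd f X hexact x (by omega), show n - 2 + 1 = n - 1 by omega]
    _ = f (glue x x (n - 1)) := (hexact (n - 1) (by omega) (by omega) x x).symm
    _ = f x := by rw [glue_self]

end
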